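/- arXiv:2001.03112 — 6 statements merged into one kernel-verified Lean document; each statement's English description precedes it below -/
import Mathlib

section
/- Let X be a metrizable topological space and let E be a symmetric open subset of X × X containing the diagonal. Then there exists a symmetric open subset F of X × X containing the diagonal such that F ∘ F ⊆ E, where F ∘ F = {(a,c) : ∃ b, (a,b) ∈ F and (b,c) ∈ F}. -/
/-!
Pick a metric. Around each diagonal point `(x, x)` the open set `E` contains a square
`B(x, ε x)²`; let `F` be the union of the shrunken squares `B(x, ε x / 4)²`. If `(a, b)` lies in
the square at `x` and `(b, c)` in the square at `y` with, say, `ε y ≤ ε x`, then the two balls meet,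
so `B(y, ε y / 4) ⊆ B(x, ε x)` and `(a, c)` lies in the big square at `x`.
-/

open Metric Set SetRel

namespace Metric

variable {X : Type*} [PseudoMetricSpace X]

lemma ball_div_four_subset_ball_of_inter_nonempty {x y : X} {r s : ℝ} (hsr : s ≤ r)
    (h : (ball x (r / 4) ∩ ball y (s / 4)).Nonempty) : ball y (s / 4) ⊆ ball x r := by
  obtain ⟨b, hbx, hby⟩ := h
  refine ball_subset_ball' ?_
  have : dist y x < s / 4 + r / 4 :=
    (dist_triangle_right y x b).trans_lt (add_lt_add (mem_ball'.mp hby) (mem_ball'.mp hbx))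
  linarith [dist_nonneg (x := y) (y := x)]

def ballSquares (ε : X → ℝ) : SetRel X X :=
  ⋃ x, ball x (ε x) ×ˢ ball x (ε x)

lemma isOpen_ballSquares (ε : X → ℝ) : IsOpen (ballSquares ε) :=
  isOpen_iUnion fun _ => isOpen_ball.prod isOpen_ball

lemma swap_mem_ballSquares {ε : X → ℝ} {p : X × X} (hp : p ∈ ballSquares ε) :
    p.swap ∈ ballSquares ε := by
  obtain ⟨x, hx⟩ := mem_iUnion.mp hp
  exact mem_iUnion.mpr ⟨x, mem_prod.mpr ⟨hx.2, hx.1⟩⟩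

lemma diag_mem_ballSquares {ε : X → ℝ} (hε : ∀ x, 0 < ε x) (x : X) :
    (x, x) ∈ ballSquares ε :=
  mem_iUnion.mpr ⟨x, mem_ball_self (hε x), mem_ball_self (hε x)⟩

lemma ballSquares_quarter_comp_subset (ε : X → ℝ) :
    ballSquares (ε · / 4) ○ ballSquares (ε · / 4) ⊆ ballSquares ε := by
  rintro ⟨a, c⟩ ⟨b, hab, hbc⟩
  obtain ⟨x, hax, hbx⟩ := mem_iUnion.mp hab
  obtain ⟨y, hby, hcy⟩ := mem_iUnion.mp hbc
  refine mem_iUnion.mpr ?_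
  rcases le_total (ε y) (ε x) with hyx | hxy
  · have hsub := ball_div_four_subset_ball_of_inter_nonempty hyx ⟨b, hbx, hby⟩
    have hquarter := ball_div_four_subset_ball_of_inter_nonempty le_rfl ⟨b, hbx, hbx⟩
    exact ⟨x, hquarter hax, hsub hcy⟩
  · have hsub := ball_div_four_subset_ball_of_inter_nonempty hxy ⟨b, hby, hbx⟩
    have hquarter := ball_div_four_subset_ball_of_inter_nonempty le_rfl ⟨b, hby, hby⟩
    exact ⟨y, hsub hax, hquarter hcy⟩

lemma exists_pos_ballSquares_subset {E : Set (X × X)} (hEopen : IsOpen E)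
    (hEdiag : ∀ x : X, (x, x) ∈ E) : ∃ ε : X → ℝ, (∀ x, 0 < ε x) ∧ ballSquares ε ⊆ E := by
  have hsquare : ∀ x : X, ∃ r > 0, ball x r ×ˢ ball x r ⊆ E := fun x => by
    obtain ⟨r, hr, hsub⟩ := isOpen_iff.mp hEopen (x, x) (hEdiag x)
    exact ⟨r, hr, ball_prod_same x x r ▸ hsub⟩
  choose ε hεpos hεsub using hsquare
  exact ⟨ε, hεpos, iUnion_subset hεsub⟩

end Metric

theorem exists_symmetric_open_square_subset_general {X : Type*} [TopologicalSpace X]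
    [TopologicalSpace.MetrizableSpace X]
    (E : Set (X × X)) (hEopen : IsOpen E)
    (hEdiag : ∀ x : X, (x, x) ∈ E) :
    ∃ F : Set (X × X), IsOpen F ∧ (∀ p : X × X, p ∈ F → (p.2, p.1) ∈ F) ∧
      (∀ x : X, (x, x) ∈ F) ∧
      {p : X × X | ∃ b : X, (p.1, b) ∈ F ∧ (b, p.2) ∈ F} ⊆ E := by
  let _ : MetricSpace X := TopologicalSpace.metrizableSpaceMetric X
  obtain ⟨ε, hεpos, hεE⟩ := exists_pos_ballSquares_subset hEopen hEdiag
  refine ⟨ballSquares (ε · / 4), isOpen_ballSquares _, fun _ => swap_mem_ballSquares,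
    diag_mem_ballSquares fun x => by linarith [hεpos x], ?_⟩
  exact (ballSquares_quarter_comp_subset ε).trans hεE

/-- In a metrizable topological space, every symmetric open set
`E ⊆ X × X` containing the diagonal contains the composition `F ∘ F` of a
symmetric open set `F ⊆ X × X` containing the diagonal. -/
theorem exists_symmetric_open_square_subset {X : Type*} [TopologicalSpace X]
    [TopologicalSpace.MetrizableSpace X]
    (E : Set (X × X)) (hEopen : IsOpen E)
    (hEsymm : ∀ p : X × X, p ∈ E → (p.2, p.1) ∈ E)
    (hEdiag : ∀ x : X, (x, x) ∈ E) :
    ∃ F : Set (X × X), IsOpen F ∧ (∀ p : X × X, p ∈ F → (p.2, p.1) ∈ F) ∧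
      (∀ x : X, (x, x) ∈ F) ∧
      {p : X × X | ∃ b : X, (p.1, b) ∈ F ∧ (b, p.2) ∈ F} ⊆ E :=
  exists_symmetric_open_square_subset_general E hEopen hEdiag
end

section
/- Let X be a metrizable topological space. The collection of all symmetric subsets of X × X that contain an open set containing the diagonal is the set of entourages of a uniform structure on X whose induced topology is the topology of X, and this uniform structure contains every uniform structure on X compatible with the topology; that is, it is the finest uniformity compatible with the topology of X. -/
/-!
The entourages in question are exactly the neighbourhoods of the diagonal, up to symmetrisation.
Every entourage of a compatible uniformity is such a neighbourhood, so the only point is that the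
neighbourhoods of the diagonal of a metric space satisfy the composition axiom. If `W` is an open
neighbourhood of the diagonal and `g x` is the distance from `(x, x)` to the complement of `W`, then
`g` is positive and `1`-Lipschitz, and the relation `dist x y < g x / 3` composed with itself stays
inside `W`.
-/

open Set Filter Topology Metric
open scoped SetRel

theorem mem_nhdsSet_diagonal_iff {X : Type*} [TopologicalSpace X] {S : Set (X × X)} :
    S ∈ 𝓝ˢ (diagonal X) ↔ ∃ V ⊆ S, IsOpen V ∧ ∀ x : X, (x, x) ∈ V := by
  simp only [mem_nhdsSet_iff_exists, diagonal_subset_iff]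
  exact ⟨fun ⟨V, hVo, hdV, hVS⟩ => ⟨V, hVS, hVo, hdV⟩,
    fun ⟨V, hVS, hVo, hdV⟩ => ⟨V, hVo, hdV, hVS⟩⟩

theorem mem_nhdsSet_diagonal_iff_exists_symmetric {X : Type*} [TopologicalSpace X]
    {S : Set (X × X)} :
    S ∈ 𝓝ˢ (diagonal X) ↔ ∃ T ⊆ S, (∀ p : X × X, p ∈ T → (p.2, p.1) ∈ T) ∧
      ∃ V ⊆ T, IsOpen V ∧ ∀ x : X, (x, x) ∈ V := by
  constructor
  · intro hS
    obtain ⟨V, hVS, hVo, hdV⟩ := mem_nhdsSet_diagonal_iff.1 hS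
    refine ⟨V ∩ Prod.swap ⁻¹' V, inter_subset_left.trans hVS, fun p hp => ⟨hp.2, hp.1⟩,
      _, subset_rfl, hVo.inter (hVo.preimage continuous_swap), fun x => ⟨hdV x, hdV x⟩⟩
  · rintro ⟨T, hTS, -, V, hVT, hVo, hdV⟩
    exact mem_nhdsSet_diagonal_iff.2 ⟨V, hVT.trans hTS, hVo, hdV⟩

theorem Metric.exists_comp_subset_of_mem_nhdsSet_diagonal {X : Type*} [PseudoMetricSpace X]
    {W : Set (X × X)} (hW : W ∈ 𝓝ˢ (diagonal X)) : ∃ V ∈ 𝓝ˢ (diagonal X), V ○ V ⊆ W := by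
  obtain ⟨U, hUo, hdU, hUW⟩ := mem_nhdsSet_iff_exists.1 hW
  -- `infDist` to the empty set is `0`, so `U = univ` is handled separately.
  rcases Uᶜ.eq_empty_or_nonempty with hU | hU
  · exact ⟨univ, univ_mem, fun p _ => hUW (compl_empty_iff.1 hU ▸ mem_univ p)⟩
  set g : X → ℝ := fun x => infDist (x, x) Uᶜ
  have g_pos (x : X) : 0 < g x :=
    (hUo.isClosed_compl.notMem_iff_infDist_pos hU).1 (not_not.2 (hdU rfl))
  have g_le (x y : X) : g y ≤ g x + dist x y := by
    simpa [Prod.dist_eq, dist_comm] using infDist_le_infDist_add_dist (x := (y, y)) (y := (x, x))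
      (s := Uᶜ)
  have mem_of_dist_lt {x z : X} (h : dist x z < g x) : (x, z) ∈ U :=
    not_not.1 <| notMem_of_dist_lt_infDist (x := (x, x)) (y := (x, z)) <| by
      simpa [Prod.dist_eq] using h
  have g_cont : Continuous g :=
    (continuous_infDist_pt _).comp (continuous_id.prodMk continuous_id)
  refine ⟨{p | dist p.1 p.2 < g p.1 / 3}, ?_, ?_⟩
  · refine (isOpen_lt (continuous_fst.dist continuous_snd)
      ((g_cont.comp continuous_fst).div_const 3)).mem_nhdsSet.2 ?_
    exact diagonal_subset_iff.2 fun x => by simpa using g_pos x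
  · rintro ⟨x, z⟩ ⟨y, hxy : dist x y < g x / 3, hyz : dist y z < g y / 3⟩
    refine hUW (mem_of_dist_lt ?_)
    calc dist x z ≤ dist x y + dist y z := dist_triangle x y z
      _ < g x / 3 + (g x + g x / 3) / 3 :=
        add_lt_add hxy (hyz.trans_le (by linarith [g_le x y, hxy.le]))
      _ < g x := by linarith [g_pos x]

namespace UniformSpace

variable {X : Type*} [uX : UniformSpace X]

abbrev fine (hcomp : ∀ W ∈ 𝓝ˢ (diagonal X), ∃ V ∈ 𝓝ˢ (diagonal X), V ○ V ⊆ W) :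
    UniformSpace X where
  toTopologicalSpace := uX.toTopologicalSpace
  uniformity := 𝓝ˢ (diagonal X)
  symm := continuous_swap.tendsto_nhdsSet fun _ h => h.symm
  comp W hW := by
    obtain ⟨V, hV, hVW⟩ := hcomp W hW
    exact mem_of_superset (mem_lift' hV) hVW
  nhds_eq_comap_uniformity x := le_antisymm
    ((Continuous.prodMk_right x).tendsto x
      |>.mono_right (nhds_le_nhdsSet (mem_diagonal x))).le_comap
    ((Filter.comap_mono nhdsSet_diagonal_le_uniformity).trans nhds_eq_comap_uniformity.ge)

theorem fine_le {hcomp : ∀ W ∈ 𝓝ˢ (diagonal X), ∃ V ∈ 𝓝ˢ (diagonal X), V ○ V ⊆ W}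
    {u : UniformSpace X} (hu : u.toTopologicalSpace = uX.toTopologicalSpace) :
    @fine _ uX hcomp ≤ u := by
  have := @nhdsSet_diagonal_le_uniformity X u
  rwa [hu] at this

end UniformSpace

/-- On a metrizable topological space, the collection of all
symmetric subsets of `X × X` containing an open set containing the diagonal
generates a uniform structure (it is a basis of entourages for it) whose
topology is the given one, and this uniform structure is the finest uniformity
compatible with the topology: it contains every compatible uniform structure. -/
theorem exists_fine_uniformity {X : Type*} [t : TopologicalSpace X]
    [TopologicalSpace.MetrizableSpace X] :
    ∃ U : UniformSpace X,
      U.toTopologicalSpace = t ∧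
      (∀ S : Set (X × X), S ∈ @uniformity X U ↔
        ∃ T : Set (X × X), T ⊆ S ∧ (∀ p : X × X, p ∈ T → (p.2, p.1) ∈ T) ∧
          ∃ V : Set (X × X), V ⊆ T ∧ IsOpen V ∧ ∀ x : X, (x, x) ∈ V) ∧
      (∀ S : Set (X × X),
        ((∀ p : X × X, p ∈ S → (p.2, p.1) ∈ S) ∧
          ∃ V : Set (X × X), V ⊆ S ∧ IsOpen V ∧ ∀ x : X, (x, x) ∈ V) →
        S ∈ @uniformity X U) ∧
      (∀ U' : UniformSpace X, U'.toTopologicalSpace = t →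
        ∀ S : Set (X × X), S ∈ @uniformity X U' → S ∈ @uniformity X U) := by
  let _ : MetricSpace X := TopologicalSpace.metrizableSpaceMetric X
  refine ⟨UniformSpace.fine fun _ => exists_comp_subset_of_mem_nhdsSet_diagonal, rfl,
    fun _ => mem_nhdsSet_diagonal_iff_exists_symmetric,
    fun _ hS => mem_nhdsSet_diagonal_iff.2 hS.2,
    fun U' hU' => UniformSpace.fine_le (uX := PseudoMetricSpace.toUniformSpace) hU'⟩
end

section
/- If a uniform space X has a chain component that is not uniformly open, then X has infinitely many chain components. -/
/-! Since a chain component is an intersection, over all entourages `E`, of `E`-chain classes, and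
each `E`-chain class is uniformly `E`-open, finitely many chain components can be separated from
`ChainComp x` by a single entourage (the intersection of finitely many separating ones); for that
entourage the chain class of `x` is exactly `ChainComp x`, which is therefore uniformly open. -/

namespace WC

/-- A chain for the relation `R`: consecutive entries of the list satisfy `R`. -/
def IsChain {Y : Type*} (R : Y → Y → Prop) (α : List Y) : Prop :=
  List.Chain' R α

/-- A basic move between chains: adding or removing a single point other than an
endpoint (the first and last points, as values, are unchanged). -/
def Move {Y : Type*} (R : Y → Y → Prop) (α β : List Y) : Prop :=
  IsChain R α ∧ IsChain R β ∧ α.head? = β.head? ∧ α.getLast? = β.getLast? ∧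
    ∃ (γ δ : List Y) (x : Y),
      (α = γ ++ δ ∧ β = γ ++ x :: δ) ∨ (β = γ ++ δ ∧ α = γ ++ x :: δ)

/-- Two chains are homotopic (relative to `R`) if they are connected by a finite
sequence of basic moves. -/
def Homotopic {Y : Type*} (R : Y → Y → Prop) : List Y → List Y → Prop :=
  Relation.ReflTransGen (Move R)

/-- The chain `α` starts at `x` and ends at `y`. -/
def FromTo {Y : Type*} (α : List Y) (x y : Y) : Prop :=
  α.head? = some x ∧ α.getLast? = some y

end WC
/-- An entourage: a symmetric member of the uniformity. -/
def Entourage (X : Type*) [UniformSpace X] (E : Set (X × X)) : Prop :=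
  E ∈ uniformity X ∧ ∀ p : X × X, p ∈ E → (p.2, p.1) ∈ E

/-- The relation determined by a subset of `X × X`. -/
def URel {X : Type*} (E : Set (X × X)) : X → X → Prop :=
  fun x y => (x, y) ∈ E

/-- An `E`-chain. -/
def UChain {X : Type*} (E : Set (X × X)) (α : List X) : Prop :=
  WC.IsChain (URel E) α

/-- `E`-homotopy of chains. -/
def UHomotopic {X : Type*} (E : Set (X × X)) : List X → List X → Prop :=
  WC.Homotopic (URel E)

/-- A uniform space is chain connected if any two points are joined by an
`E`-chain for every entourage `E`. -/
def UChainConnected (X : Type*) [UniformSpace X] : Prop :=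
  ∀ E : Set (X × X), Entourage X E → ∀ x y : X,
    ∃ α : List X, UChain E α ∧ WC.FromTo α x y

/-- For entourages `F ⊆ E`, `E` is weakly `F`-chained if every pair in `F` is
joined by arbitrarily fine chains `E`-homotopic to the two-point chain. -/
def WeaklyFChained {X : Type*} [UniformSpace X] (E F : Set (X × X)) : Prop :=
  ∀ x y : X, (x, y) ∈ F → ∀ D : Set (X × X), Entourage X D →
    ∃ α : List X, UChain D α ∧ WC.FromTo α x y ∧ UHomotopic E α [x, y]

/-- A uniform space is weakly chained if it is chain connected and its
uniformity has a basis of entourages `E`, each weakly `F`-chained for some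
entourage `F ⊆ E`. -/
def UWeaklyChained (X : Type*) [UniformSpace X] : Prop :=
  UChainConnected X ∧
    ∀ G ∈ uniformity X, ∃ E : Set (X × X), Entourage X E ∧ E ⊆ G ∧
      ∃ F : Set (X × X), Entourage X F ∧ F ⊆ E ∧ WeaklyFChained E F

/-- `U` is uniformly `E`-open: with every point it contains its `E`-ball. -/
def UOpen {X : Type*} (E : Set (X × X)) (U : Set X) : Prop :=
  ∀ a ∈ U, ∀ z : X, (a, z) ∈ E → z ∈ U

/-- `U` is uniformly open: uniformly `E`-open for some entourage `E`. -/
def UniformlyOpen {X : Type*} [UniformSpace X] (U : Set X) : Prop :=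
  ∃ E : Set (X × X), Entourage X E ∧ UOpen E U

/-- The chain component of `x`: all points joined to `x` by an `E`-chain for
every entourage `E`. -/
def ChainComp {X : Type*} [UniformSpace X] (x : X) : Set X :=
  {y : X | ∀ E : Set (X × X), Entourage X E →
    ∃ α : List X, UChain E α ∧ WC.FromTo α x y}


open Relation

theorem WC.exists_isChain_fromTo_iff {Y : Type*} {R : Y → Y → Prop} {x y : Y} :
    (∃ α : List Y, WC.IsChain R α ∧ WC.FromTo α x y) ↔ ReflTransGen R x y := by
  constructor
  · rintro ⟨α, hα, hx, hy⟩
    have hne : α ≠ [] := by rintro rfl; cases hx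
    rw [List.head?_eq_some_head hne, Option.some_inj] at hx
    rw [List.getLast?_eq_some_getLast hne, Option.some_inj] at hy
    exact hx ▸ hy ▸ List.relationReflTransGen_of_exists_isChain α hα hne
  · intro h
    obtain ⟨α, hne, hα, hx, hy⟩ := List.exists_isChain_ne_nil_of_relationReflTransGen h
    exact ⟨α, hα, hx ▸ List.head?_eq_some_head hne,
      hy ▸ List.getLast?_eq_some_getLast hne⟩

section ChainComponents

variable {X : Type*} [UniformSpace X]

theorem Entourage.biInter {ι : Type*} {s : Set ι} (hs : s.Finite) {E : ι → Set (X × X)}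
    (hE : ∀ i ∈ s, Entourage X (E i)) : Entourage X (⋂ i ∈ s, E i) := by
  refine ⟨(Filter.biInter_mem hs).2 fun i hi => (hE i hi).1, fun p hp => ?_⟩
  simp only [Set.mem_iInter] at hp ⊢
  exact fun i hi => (hE i hi).2 p (hp i hi)

theorem mem_chainComp_iff {x y : X} :
    y ∈ ChainComp x ↔ ∀ E, Entourage X E → ReflTransGen (URel E) x y :=
  forall₂_congr fun _ _ => WC.exists_isChain_fromTo_iff

theorem mem_chainComp_self (x : X) : x ∈ ChainComp x :=
  mem_chainComp_iff.2 fun _ _ => ReflTransGen.refl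

theorem mem_chainComp_symm {x y : X} (hy : y ∈ ChainComp x) : x ∈ ChainComp y :=
  mem_chainComp_iff.2 fun E hE => ReflTransGen.mono (fun _ _ h => hE.2 _ h) _ _
    (ReflTransGen.swap _ _ (mem_chainComp_iff.1 hy E hE))

theorem mem_chainComp_trans {x y z : X} (hy : y ∈ ChainComp x) (hz : z ∈ ChainComp y) :
    z ∈ ChainComp x :=
  mem_chainComp_iff.2 fun E hE =>
    (mem_chainComp_iff.1 hy E hE).trans (mem_chainComp_iff.1 hz E hE)

theorem exists_entourage_separating_chainComp (x y : X) :
    ∃ E, Entourage X E ∧ ∀ z ∈ ChainComp y, ReflTransGen (URel E) x z → z ∈ ChainComp x := by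
  by_cases hy : y ∈ ChainComp x
  · exact ⟨Set.univ, ⟨Filter.univ_mem, fun _ _ => trivial⟩,
      fun z hz _ => mem_chainComp_trans hy hz⟩
  · obtain ⟨E, hE, hxy⟩ := not_forall₂.1 (mt mem_chainComp_iff.2 hy)
    refine ⟨E, hE, fun z hz hxz => absurd ?_ hxy⟩
    exact hxz.trans (mem_chainComp_iff.1 (mem_chainComp_symm hz) E hE)

theorem uniformlyOpen_chainComp_of_finite (x : X)
    (hfin : {C : Set X | ∃ y : X, C = ChainComp y}.Finite) : UniformlyOpen (ChainComp x) := by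
  have hsep : ∀ C ∈ {C : Set X | ∃ y : X, C = ChainComp y}, ∃ E, Entourage X E ∧
      ∀ z ∈ C, ReflTransGen (URel E) x z → z ∈ ChainComp x := by
    rintro C ⟨y, rfl⟩
    exact exists_entourage_separating_chainComp x y
  choose! D hD hDsep using hsep
  have hE := Entourage.biInter hfin hD
  refine ⟨_, hE, fun a ha z haz => ?_⟩
  have hCz : ChainComp z ∈ {C : Set X | ∃ y : X, C = ChainComp y} := ⟨z, rfl⟩
  have hxz : ReflTransGen (URel _) x z := (mem_chainComp_iff.1 ha _ hE).tail haz
  exact hDsep _ hCz z (mem_chainComp_self z)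
    (ReflTransGen.mono (fun _ _ hpq => Set.mem_iInter₂.1 hpq _ hCz) _ _ hxz)

end ChainComponents

/-- If a uniform space has a chain component that is not
uniformly open, then it has infinitely many chain components. -/
theorem infinite_chainComps_of_not_uniformlyOpen {X : Type*} [UniformSpace X]
    (x : X) (h : ¬ UniformlyOpen (ChainComp x)) :
    {C : Set X | ∃ y : X, C = ChainComp y}.Infinite :=
  fun hfin => h (uniformlyOpen_chainComp_of_finite x hfin)
end

section
/- Let X be a weakly chained uniform space and let f : X → Y be a bi-uniformly continuous surjection onto a uniform space Y; that is, f is uniformly continuous, surjective, and for every entourage E of X the image (f × f)(E) is an entourage of Y. Then Y is weakly chained. -/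
namespace WC

variable {X Y : Type*} (f : X → Y) {R : X → X → Prop} {S : Y → Y → Prop}

theorem IsChain.map (h : ∀ a b, R a b → S (f a) (f b)) {α : List X} (hα : IsChain R α) :
    IsChain S (α.map f) :=
  List.isChain_map_of_isChain f h hα

theorem FromTo.map {α : List X} {x y : X} (h : FromTo α x y) : FromTo (α.map f) (f x) (f y) := by
  simp [FromTo, h.1, h.2]

theorem Move.map (h : ∀ a b, R a b → S (f a) (f b)) {α β : List X} (hm : Move R α β) :
    Move S (α.map f) (β.map f) := by
  obtain ⟨hα, hβ, hhead, hlast, γ, δ, x, hsplit⟩ := hm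
  refine ⟨hα.map f h, hβ.map f h, by simp [hhead], by simp [hlast], γ.map f, δ.map f, f x, ?_⟩
  rcases hsplit with ⟨rfl, rfl⟩ | ⟨rfl, rfl⟩
  · exact Or.inl ⟨List.map_append .., by simp⟩
  · exact Or.inr ⟨List.map_append .., by simp⟩

theorem Homotopic.map (h : ∀ a b, R a b → S (f a) (f b)) {α β : List X}
    (hαβ : Homotopic R α β) : Homotopic S (α.map f) (β.map f) :=
  Relation.ReflTransGen.lift (List.map f) (fun _ _ => Move.map f h) _ _ hαβ

end WC

section Image

variable {X Y : Type*} [UniformSpace X] [UniformSpace Y] {f : X → Y}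

theorem Entourage.preimage (hf : UniformContinuous f) {E : Set (Y × Y)} (hE : Entourage Y E) :
    Entourage X (Prod.map f f ⁻¹' E) :=
  ⟨hf hE.1, fun _ hp => hE.2 _ hp⟩

theorem UChainConnected.of_surjective (hf : UniformContinuous f)
    (hsurj : Function.Surjective f) (hX : UChainConnected X) : UChainConnected Y := by
  intro E hE x' y'
  obtain ⟨x, rfl⟩ := hsurj x'
  obtain ⟨y, rfl⟩ := hsurj y'
  obtain ⟨α, hα, hxy⟩ := hX _ (hE.preimage hf) x y
  exact ⟨α.map f, hα.map (S := URel _) f fun _ _ h => h, hxy.map f⟩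

theorem WeaklyFChained.image (hf : UniformContinuous f) {E F : Set (X × X)}
    (hEF : WeaklyFChained E F) : WeaklyFChained (Prod.map f f '' E) (Prod.map f f '' F) := by
  rintro _ _ ⟨⟨x, y⟩, hxy, hxy'⟩ D hD
  obtain ⟨rfl, rfl⟩ := Prod.mk.inj hxy'
  obtain ⟨α, hα, hfrom, hhom⟩ := hEF x y hxy _ (hD.preimage hf)
  exact ⟨α.map f, hα.map (S := URel _) f fun _ _ h => h, hfrom.map f,
    hhom.map f fun a b hab => ⟨(a, b), hab, rfl⟩⟩

end Image

/-- The image of a weakly chained uniform space under a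
bi-uniformly continuous surjection is weakly chained. -/
theorem uWeaklyChained_of_biUniform_surjection {X Y : Type*}
    [UniformSpace X] [UniformSpace Y] (f : X → Y)
    (hX : UWeaklyChained X)
    (hcont : UniformContinuous f) (hsurj : Function.Surjective f)
    (himage : ∀ E : Set (X × X), Entourage X E → Entourage Y (Prod.map f f '' E)) :
    UWeaklyChained Y := by
  obtain ⟨hconn, hbasis⟩ := hX
  refine ⟨hconn.of_surjective hcont hsurj, fun G hG => ?_⟩
  obtain ⟨E, hE, hEG, F, hF, hFE, hEF⟩ := hbasis _ (hcont hG)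
  exact ⟨_, himage E hE, Set.image_subset_iff.mpr hEG, _, himage F hF, Set.image_mono hFE,
    hEF.image hcont⟩
end

section
/- Homotopy lifting in inverse limits: With Λ, {X_r}, ψ_{rs}, X = lim← X_r and E_{r,ε} as in the inverse-system setup, suppose η = {γ₀, …, γ_k} is an ε-homotopy in X_r between ε-chains γ₀ and γ_k, and suppose γ̂₀ and γ̂ₖ are E_{r,ε}-chains in X that project pointwise under ψ_r to γ₀ and γ_k respectively and that have the same first point and the same last point. Then there is an E_{r,ε}-homotopy in X from γ̂₀ to γ̂ₖ. In particular, if λ is an ε-null ε-loop in X_r, then every E_{r,ε}-loop in X projecting pointwise under ψ_r to λ is E_{r,ε}-null. -/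
/-- The relation "distance less than `ε`" on a metric space. -/
def MRel {X : Type*} [MetricSpace X] (ε : ℝ) : X → X → Prop :=
  fun x y => dist x y < ε

/-- An `ε`-chain in a metric space. -/
def MChain {X : Type*} [MetricSpace X] (ε : ℝ) (α : List X) : Prop :=
  WC.IsChain (MRel ε) α

/-- `ε`-homotopy of chains in a metric space. -/
def MHomotopic {X : Type*} [MetricSpace X] (ε : ℝ) : List X → List X → Prop :=
  WC.Homotopic (MRel ε)

/-- A metric space is chain connected if any two points are joined by an
`ε`-chain for every `ε > 0`. -/
def ChainConnected (X : Type*) [MetricSpace X] : Prop :=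
  ∀ ε : ℝ, 0 < ε → ∀ x y : X, ∃ α : List X, MChain ε α ∧ WC.FromTo α x y

/-- A metric space is weakly chained if it is chain connected and for every
`ε > 0` there is `δ > 0` such that any two points at distance `< δ` are joined
by arbitrarily fine chains that are `ε`-homotopic to the two-point chain formed
by those points. -/
def WeaklyChained (X : Type*) [MetricSpace X] : Prop :=
  ChainConnected X ∧
    ∀ ε : ℝ, 0 < ε → ∃ δ : ℝ, 0 < δ ∧ ∀ x y : X, dist x y < δ →
      ∀ κ : ℝ, 0 < κ → ∃ α : List X, MChain κ α ∧ WC.FromTo α x y ∧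
        MHomotopic ε α [x, y]

/-- The inverse limit of the system `{X_r, ψ_{rs}}`: threads in the product. -/
abbrev InvLim (Λ : Set ℝ) (X : Λ → Type*)
    (ψ : ∀ r s : Λ, (r : ℝ) ≤ (s : ℝ) → X s → X r) : Type _ :=
  {x : ∀ r : Λ, X r // ∀ (r s : Λ) (h : (r : ℝ) ≤ (s : ℝ)), ψ r s h (x s) = x r}

/-- The relation on the inverse limit given by the entourage
`E_{r,ε} = {(x̂,ŷ) : d(x_r, y_r) < ε}`. -/
def ERel (Λ : Set ℝ) (X : Λ → Type*) [∀ r, MetricSpace (X r)]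
    (ψ : ∀ r s : Λ, (r : ℝ) ≤ (s : ℝ) → X s → X r) (r : Λ) (ε : ℝ) :
    InvLim Λ X ψ → InvLim Λ X ψ → Prop :=
  fun a b => dist (a.1 r) (b.1 r) < ε


/-!
Pad a lifted chain from `â` to `ẑ` to `â :: ĝ ++ [ẑ]` (two moves, as `E_{r,ε}` is reflexive).
A move of the projected chains in `X_r` may insert or delete a copy of an endpoint, which for the
unpadded lift would change its endpoints; in the padded chain every such move happens strictly
inside and lifts to a move of `E_{r,ε}`-chains, an inserted point being lifted along the
surjection `ψ_r`. Lifting the homotopy this way leaves two padded `E_{r,ε}`-chains over the same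
`ε`-chain with the same endpoints, and these are homotopic: exchange their points one at a time,
inserting the new point before deleting the old one, which is legal since `E_{r,ε}` only sees the
projection.
-/

namespace WC

open List Function

section Relation

variable {Y : Type*} {R : Y → Y → Prop}

theorem Move.symm {α β : List Y} (h : Move R α β) : Move R β α :=
  let ⟨hα, hβ, hhead, hlast, γ, δ, x, hsplit⟩ := h
  ⟨hβ, hα, hhead.symm, hlast.symm, γ, δ, x, hsplit.symm⟩

instance : Std.Symm (Move R) := ⟨fun _ _ => Move.symm⟩

theorem Homotopic.symm {α β : List Y} (h : Homotopic R α β) : Homotopic R β α :=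
  Relation.ReflTransGen.stdSymm.symm _ _ h

theorem Homotopic.trans {α β γ : List Y} (h₁ : Homotopic R α β) (h₂ : Homotopic R β γ) :
    Homotopic R α γ :=
  Relation.ReflTransGen.trans h₁ h₂

theorem Homotopic.head?_eq {α β : List Y} (h : Homotopic R α β) : α.head? = β.head? := by
  induction h with
  | refl => rfl
  | tail _ hm ih => exact ih.trans hm.2.2.1

theorem Homotopic.getLast?_eq {α β : List Y} (h : Homotopic R α β) :
    α.getLast? = β.getLast? := by
  induction h with
  | refl => rfl
  | tail _ hm ih => exact ih.trans hm.2.2.2.1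

theorem Homotopic.isChain {α β : List Y} (h : Homotopic R α β) (hα : IsChain R α) :
    IsChain R β := by
  induction h with
  | refl => exact hα
  | tail _ hm _ => exact hm.2.1

theorem Move.ne_nil {α β : List Y} (h : Move R α β) : α ≠ [] := by
  obtain ⟨-, -, hhead, -, γ, δ, x, ⟨-, rfl⟩ | ⟨-, rfl⟩⟩ := h
  · intro hα
    simp [hα] at hhead
  · simp

theorem move_insert {γ δ : List Y} {x : Y} (hγ : γ ≠ []) (hδ : δ ≠ [])
    (h₁ : IsChain R (γ ++ δ)) (h₂ : IsChain R (γ ++ x :: δ)) :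
    Move R (γ ++ δ) (γ ++ x :: δ) := by
  refine ⟨h₁, h₂, ?_, ?_, γ, δ, x, .inl ⟨rfl, rfl⟩⟩
  · rw [head?_append_of_ne_nil _ hγ, head?_append_of_ne_nil _ hγ]
  · rw [getLast?_append_of_ne_nil _ hδ, getLast?_append_of_ne_nil _ (cons_ne_nil x δ),
      getLast?_cons, getLast?_eq_some_getLast hδ, Option.getD_some]

theorem Move.cons {a : Y} {α β : List Y} (h : Move R α β) (hα : IsChain R (a :: α)) :
    Move R (a :: α) (a :: β) := by
  obtain ⟨-, hβ, hhead, hlast, γ, δ, x, hsplit⟩ := h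
  refine ⟨hα, isChain_cons.mpr ⟨?_, hβ⟩, rfl, ?_, a :: γ, δ, x, ?_⟩
  · rw [← hhead]
    exact (isChain_cons.mp hα).1
  · rw [getLast?_cons, getLast?_cons, hlast]
  · rcases hsplit with ⟨rfl, rfl⟩ | ⟨rfl, rfl⟩
    exacts [.inl ⟨rfl, rfl⟩, .inr ⟨rfl, rfl⟩]

theorem Homotopic.cons {a : Y} {α β : List Y} (h : Homotopic R α β)
    (hα : IsChain R (a :: α)) : Homotopic R (a :: α) (a :: β) := by
  induction h with
  | refl => exact .refl
  | tail hαμ hm ih =>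
    refine ih.tail (hm.cons ?_)
    exact isChain_cons.mpr ⟨Homotopic.head?_eq hαμ ▸ (isChain_cons.mp hα).1, hm.1⟩

theorem homotopic_pad (hR : ∀ y, R y y) {α : List Y} {a z : Y} (hα : IsChain R α)
    (ha : α.head? = some a) (hz : α.getLast? = some z) :
    Homotopic R α (a :: α ++ [z]) := by
  have hcons : IsChain R (a :: α) := isChain_cons.mpr ⟨by simp [ha, hR a], hα⟩
  have hlast : (a :: α).getLast? = some z := by rw [getLast?_cons, hz]; rfl
  have m₁ : Move R α (a :: α) :=
    ⟨hα, hcons, by rw [ha]; rfl, hlast ▸ hz, [], α, a, .inl ⟨rfl, rfl⟩⟩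
  have m₂ : Move R (a :: α) (a :: α ++ [z]) := by
    refine ⟨hcons, isChain_append.mpr ⟨hcons, isChain_singleton z, ?_⟩, rfl, ?_,
      a :: α, [], z, .inl ⟨(append_nil _).symm, rfl⟩⟩
    · simp [hlast, hR z]
    · rw [hlast, getLast?_concat]
  exact (Relation.ReflTransGen.single m₁).tail m₂

theorem isChain_cons_append_singleton_iff {h l : Y} {γ : List Y} (hγ : γ ≠ []) :
    List.IsChain R (h :: γ ++ [l]) ↔
      (∀ y ∈ γ.head?, R h y) ∧ List.IsChain R γ ∧ ∀ y ∈ γ.getLast?, R y l := by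
  rw [cons_append, isChain_cons, isChain_append, head?_append_of_ne_nil _ hγ]
  simp

theorem Move.isChain_frame {γ γ' : List Y} (hm : Move R γ γ') {h l : Y}
    (hγ : IsChain R (h :: γ ++ [l])) : IsChain R (h :: γ' ++ [l]) := by
  obtain ⟨hhead_rel, -, hlast_rel⟩ := (isChain_cons_append_singleton_iff hm.ne_nil).mp hγ
  refine (isChain_cons_append_singleton_iff hm.symm.ne_nil).mpr ⟨?_, hm.2.1, ?_⟩
  · rwa [← hm.2.2.1]
  · rwa [← hm.2.2.2.1]

end Relation

section Projection

variable {Y B : Type*} {R : B → B → Prop} {π : Y → B}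

theorem isChain_onFun_iff {g : List Y} : IsChain (R on π) g ↔ List.IsChain R (g.map π) :=
  (isChain_map π).symm

theorem homotopic_cons_cons_of_map_eq (hR : ∀ y, R y y) {a b c : Y} {w : List Y}
    (hw : w ≠ []) (hbc : π b = π c) (h : IsChain (R on π) (a :: b :: w)) :
    Homotopic (R on π) (a :: b :: w) (a :: c :: w) := by
  rw [isChain_onFun_iff, map_cons, map_cons] at h
  have hc : IsChain (R on π) (a :: c :: w) := by
    rwa [isChain_onFun_iff, map_cons, map_cons, ← hbc]
  have hcb : IsChain (R on π) (a :: c :: b :: w) := by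
    rw [isChain_onFun_iff, map_cons, map_cons, map_cons, ← hbc]
    obtain ⟨hab, hbw⟩ := isChain_cons_cons.mp h
    exact isChain_cons_cons.mpr ⟨hab, isChain_cons_cons.mpr ⟨hR _, hbw⟩⟩
  have m₁ : Move (R on π) ([a] ++ b :: w) ([a] ++ c :: b :: w) :=
    move_insert (cons_ne_nil a []) (cons_ne_nil b w) (isChain_onFun_iff.mpr h) hcb
  have m₂ : Move (R on π) ([a, c] ++ w) ([a, c] ++ b :: w) :=
    move_insert (cons_ne_nil a [c]) hw hc hcb
  exact (Relation.ReflTransGen.single m₁).tail m₂.symm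

theorem homotopic_cons_of_map_eq (hR : ∀ y, R y y) {a : Y} :
    ∀ {u v : List Y}, IsChain (R on π) (a :: u) → IsChain (R on π) (a :: v) →
      u.map π = v.map π → (a :: u).getLast? = (a :: v).getLast? →
      Homotopic (R on π) (a :: u) (a :: v)
  | [], v, _, _, hmap, _ => by
    obtain rfl := map_eq_nil_iff.mp hmap.symm
    exact .refl
  | b :: u, v, hu, hv, hmap, hlast => by
    obtain ⟨c, v, rfl, hcb, hmap⟩ := map_eq_cons_iff.mp hmap.symm
    rcases eq_or_ne u [] with rfl | hu_ne
    · obtain rfl := map_eq_nil_iff.mp hmap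
      obtain rfl : b = c := by simpa using hlast
      exact .refl
    have hv_ne : v ≠ [] := by rintro rfl; simp [hu_ne] at hmap
    have hrep := homotopic_cons_cons_of_map_eq hR hu_ne hcb.symm hu
    have htail : Homotopic (R on π) (c :: u) (c :: v) := by
      refine homotopic_cons_of_map_eq hR (isChain_cons.mp (hrep.isChain hu)).2
        (isChain_cons.mp hv).2 hmap.symm ?_
      simpa [getLast?_cons, getLast?_eq_some_getLast hu_ne, getLast?_eq_some_getLast hv_ne]
        using hlast
    exact hrep.trans (htail.cons (hrep.isChain hu))

theorem homotopic_of_map_eq (hR : ∀ y, R y y) {u v : List Y} (hu : IsChain (R on π) u)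
    (hv : IsChain (R on π) v) (hmap : u.map π = v.map π) (hhead : u.head? = v.head?)
    (hlast : u.getLast? = v.getLast?) : Homotopic (R on π) u v := by
  rcases u with _ | ⟨a, u⟩
  · obtain rfl := map_eq_nil_iff.mp hmap.symm
    exact .refl
  rcases v with _ | ⟨a', v⟩
  · simp at hhead
  obtain rfl : a = a' := by simpa using hhead
  exact homotopic_cons_of_map_eq hR hu hv (by simpa using hmap) hlast

theorem Move.lift_frame (hπ : Surjective π) {γ γ' : List B} (hm : Move R γ γ') {h l : B}
    {g : List Y} (hg : IsChain (R on π) g) (hmap : g.map π = h :: γ ++ [l]) :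
    ∃ g', Move (R on π) g g' ∧ g'.map π = h :: γ' ++ [l] := by
  have hframe : List.IsChain R (h :: γ' ++ [l]) :=
    hm.isChain_frame (hmap ▸ isChain_onFun_iff.mp hg)
  obtain ⟨-, -, -, -, c, d, x, ⟨rfl, rfl⟩ | ⟨rfl, rfl⟩⟩ := hm
  · rw [show h :: (c ++ d) ++ [l] = (h :: c) ++ (d ++ [l]) by simp] at hmap
    obtain ⟨u, w, rfl, hu, hw⟩ := map_eq_append_iff.mp hmap
    obtain ⟨y, rfl⟩ := hπ x
    have hmap' : (u ++ y :: w).map π = h :: (c ++ π y :: d) ++ [l] := by simp [hu, hw]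
    refine ⟨u ++ y :: w, move_insert ?_ ?_ hg (isChain_onFun_iff.mpr (hmap' ▸ hframe)),
      hmap'⟩
    · rintro rfl; simp at hu
    · rintro rfl; simp at hw
  · rw [show h :: (c ++ x :: d) ++ [l] = (h :: c) ++ x :: (d ++ [l]) by simp] at hmap
    obtain ⟨u, w', rfl, hu, hw'⟩ := map_eq_append_iff.mp hmap
    obtain ⟨y, w, rfl, -, hw⟩ := map_eq_cons_iff.mp hw'
    have hmap' : (u ++ w).map π = h :: (c ++ d) ++ [l] := by simp [hu, hw]
    refine ⟨u ++ w, (move_insert ?_ ?_ (isChain_onFun_iff.mpr (hmap' ▸ hframe)) hg).symm,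
      hmap'⟩
    · rintro rfl; simp at hu
    · rintro rfl; simp at hw

theorem Homotopic.lift_frame (hπ : Surjective π) {γ₀ γk : List B} (hh : Homotopic R γ₀ γk)
    {h l : B} {g : List Y} (hg : IsChain (R on π) g) (hmap : g.map π = h :: γ₀ ++ [l]) :
    ∃ g', Homotopic (R on π) g g' ∧ g'.map π = h :: γk ++ [l] := by
  induction hh with
  | refl => exact ⟨g, .refl, hmap⟩
  | tail _ hm ih =>
    obtain ⟨g', hgg', hmap'⟩ := ih
    obtain ⟨g'', hm', hmap''⟩ := hm.lift_frame hπ (hgg'.isChain hg) hmap'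
    exact ⟨g'', Relation.ReflTransGen.tail hgg' hm', hmap''⟩

theorem Homotopic.lift (hR : ∀ y, R y y) (hπ : Surjective π) {γ₀ γk : List B}
    (hh : Homotopic R γ₀ γk) {g₀ gk : List Y} (hg₀ : IsChain (R on π) g₀)
    (hgk : IsChain (R on π) gk) (hmap₀ : g₀.map π = γ₀) (hmapk : gk.map π = γk)
    (hhead : g₀.head? = gk.head?) (hlast : g₀.getLast? = gk.getLast?) :
    Homotopic (R on π) g₀ gk := by
  rcases g₀ with _ | ⟨a, t⟩
  · obtain rfl := head?_eq_none_iff.mp hhead.symm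
    exact .refl
  set g₀ := a :: t
  obtain ⟨z, hz⟩ : ∃ z, g₀.getLast? = some z :=
    ⟨_, getLast?_eq_some_getLast (cons_ne_nil a t)⟩
  have hRπ : ∀ y, (R on π) y y := fun y => hR (π y)
  have hpad₀ := homotopic_pad hRπ hg₀ rfl hz
  have hpadk := homotopic_pad hRπ hgk hhead.symm (hlast ▸ hz)
  obtain ⟨g', hg', hmap'⟩ := hh.lift_frame hπ (hpad₀.isChain hg₀) (h := π a) (l := π z)
    (by simp [← hmap₀])
  have hg'k : Homotopic (R on π) g' (a :: gk ++ [z]) := by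
    refine homotopic_of_map_eq hR (hg'.isChain (hpad₀.isChain hg₀)) (hpadk.isChain hgk)
      (by simp [hmap', hmapk]) ?_ ?_
    · rw [← hg'.head?_eq]; rfl
    · rw [← hg'.getLast?_eq, getLast?_concat, getLast?_concat]
  exact ((hpad₀.trans hg').trans hg'k).trans hpadk.symm

end Projection

end WC

section InverseLimit

variable {Λ : Set ℝ} {X : Λ → Type*} {ψ : ∀ r s : Λ, (r : ℝ) ≤ (s : ℝ) → X s → X r}

theorem exists_monotone_cofinal_seq (hunb : ∀ M : ℝ, ∃ r ∈ Λ, M < r) (r : Λ) :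
    ∃ s : ℕ → Λ, (r : ℝ) ≤ s 0 ∧ (∀ n, (s n : ℝ) ≤ s (n + 1)) ∧
      ∀ t : Λ, ∃ n, (t : ℝ) ≤ s n := by
  choose next hmem hlt using hunb
  let m : ℕ → ℝ := fun n => Nat.rec (next r) (fun n M => next (max M n)) n
  have hm : ∀ n, m n ∈ Λ := fun n => by cases n <;> exact hmem _
  have hstep : ∀ n, max (m n) n < m (n + 1) := fun n => hlt _
  refine ⟨fun n => ⟨m n, hm n⟩, (hlt r).le, fun n => (le_max_left _ _).trans (hstep n).le,
    fun t => ⟨⌈(t : ℝ)⌉₊ + 1, ?_⟩⟩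
  calc (t : ℝ) ≤ ⌈(t : ℝ)⌉₊ := Nat.le_ceil _
    _ ≤ m (⌈(t : ℝ)⌉₊ + 1) := (le_max_right _ _).trans (hstep _).le

theorem InvLim.exists_forall_eq_of_seq
    (hcomp : ∀ (r s t : Λ) (hrs : (r : ℝ) ≤ (s : ℝ)) (hst : (s : ℝ) ≤ (t : ℝ))
      (x : X t), ψ r s hrs (ψ s t hst x) = ψ r t (hrs.trans hst) x)
    (s : ℕ → Λ) (hs : ∀ n, (s n : ℝ) ≤ s (n + 1)) (hcof : ∀ t : Λ, ∃ n, (t : ℝ) ≤ s n)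
    (x : ∀ n, X (s n)) (hx : ∀ n, ψ (s n) (s (n + 1)) (hs n) (x (n + 1)) = x n) :
    ∃ y : InvLim Λ X ψ, ∀ (t : Λ) n (h : (t : ℝ) ≤ s n), y.1 t = ψ t (s n) h (x n) := by
  have hmono : Monotone fun n => (s n : ℝ) := monotone_nat_of_le_succ hs
  have hcoh_le : ∀ (t : Λ) m n (hm : (t : ℝ) ≤ s m) (hn : (t : ℝ) ≤ s n), m ≤ n →
      ψ t (s m) hm (x m) = ψ t (s n) hn (x n) := by
    intro t m n hm hn hmn
    induction n, hmn using Nat.le_induction with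
    | base => rfl
    | succ n hmn ih => rw [ih (hm.trans (hmono hmn)), ← hx n, hcomp]
  have hcoh : ∀ (t : Λ) m n (hm : (t : ℝ) ≤ s m) (hn : (t : ℝ) ≤ s n),
      ψ t (s m) hm (x m) = ψ t (s n) hn (x n) := fun t m n hm hn =>
    (le_total m n).elim (hcoh_le t m n hm hn) fun hnm => (hcoh_le t n m hn hm hnm).symm
  choose N hN using hcof
  refine ⟨⟨fun t => ψ t (s (N t)) (hN t) (x (N t)), fun t u htu => ?_⟩,
    fun t n h => hcoh t _ n _ h⟩
  rw [hcomp, hcoh t (N u) (N t)]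

theorem InvLim.proj_surjective (hunb : ∀ M : ℝ, ∃ r ∈ Λ, M < r)
    (hsurj : ∀ (r s : Λ) (h : (r : ℝ) ≤ (s : ℝ)), Function.Surjective (ψ r s h))
    (hcomp : ∀ (r s t : Λ) (hrs : (r : ℝ) ≤ (s : ℝ)) (hst : (s : ℝ) ≤ (t : ℝ))
      (x : X t), ψ r s hrs (ψ s t hst x) = ψ r t (hrs.trans hst) x)
    (r : Λ) : Function.Surjective fun y : InvLim Λ X ψ => y.1 r := by
  intro x₀
  obtain ⟨s, hs₀, hs, hcof⟩ := exists_monotone_cofinal_seq hunb r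
  choose lift hlift using hsurj
  let x : ∀ n, X (s n) := fun n =>
    Nat.rec (motive := fun n => X (s n)) (lift r (s 0) hs₀ x₀)
      (fun n y => lift (s n) (s (n + 1)) (hs n) y) n
  obtain ⟨y, hy⟩ :=
    InvLim.exists_forall_eq_of_seq hcomp s hs hcof x fun _ => hlift _ _ _ _
  exact ⟨y, (hy r 0 hs₀).trans (hlift _ _ _ _)⟩

end InverseLimit

theorem invLim_homotopy_lifting_general (Λ : Set ℝ)
    (hunb : ∀ M : ℝ, ∃ r ∈ Λ, M < r)
    (X : Λ → Type*) [∀ r, MetricSpace (X r)]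
    (ψ : ∀ r s : Λ, (r : ℝ) ≤ (s : ℝ) → X s → X r)
    (hsurj : ∀ (r s : Λ) (h : (r : ℝ) ≤ (s : ℝ)), Function.Surjective (ψ r s h))
    (hcomp : ∀ (r s t : Λ) (hrs : (r : ℝ) ≤ (s : ℝ)) (hst : (s : ℝ) ≤ (t : ℝ))
      (x : X t), ψ r s hrs (ψ s t hst x) = ψ r t (hrs.trans hst) x)
    (r : Λ) (ε : ℝ) (hε : 0 < ε) :
    (∀ γ₀ γk : List (X r), MChain ε γ₀ → MChain ε γk → MHomotopic ε γ₀ γk →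
      ∀ g₀ gk : List (InvLim Λ X ψ),
        WC.IsChain (ERel Λ X ψ r ε) g₀ → WC.IsChain (ERel Λ X ψ r ε) gk →
        g₀.map (fun a => a.1 r) = γ₀ → gk.map (fun a => a.1 r) = γk →
        g₀.head? = gk.head? → g₀.getLast? = gk.getLast? →
        WC.Homotopic (ERel Λ X ψ r ε) g₀ gk) ∧
    (∀ (lam : List (X r)) (z : X r), MChain ε lam → WC.FromTo lam z z →
      MHomotopic ε lam [z] →
      ∀ lhat : List (InvLim Λ X ψ), WC.IsChain (ERel Λ X ψ r ε) lhat →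
        lhat.map (fun a => a.1 r) = lam →
        ∀ zhat : InvLim Λ X ψ, lhat.head? = some zhat →
          lhat.getLast? = some zhat →
          WC.Homotopic (ERel Λ X ψ r ε) lhat [zhat]) := by
  have hR : ∀ x : X r, MRel ε x x := fun x => by simpa [MRel] using hε
  have hπ := InvLim.proj_surjective hunb hsurj hcomp r
  refine ⟨fun _ _ _ _ hh _ _ => WC.Homotopic.lift hR hπ hh,
    fun lam z _ hlam_ends hnull lhat hlhat hmap zhat hhead hlast => ?_⟩
  have hz : zhat.1 r = z := by
    have := hlam_ends.1
    rwa [← hmap, List.head?_map, hhead, Option.map_some, Option.some_inj] at this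
  exact WC.Homotopic.lift hR hπ hnull hlhat (List.isChain_singleton zhat) hmap (by simp [hz])
    (by simp [hhead]) (by simp [hlast])

/-- **Homotopy lifting in inverse limits.** If `γ₀` and `γ_k`
are `ε`-homotopic `ε`-chains in `X_r` and `γ̂₀`, `γ̂ₖ` are `E_{r,ε}`-chains in
the inverse limit projecting pointwise to `γ₀`, `γ_k` and having the same first
and last points, then `γ̂₀` and `γ̂ₖ` are `E_{r,ε}`-homotopic. In particular,
every `E_{r,ε}`-loop projecting pointwise to an `ε`-null `ε`-loop of `X_r` is
`E_{r,ε}`-null. -/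
theorem invLim_homotopy_lifting (Λ : Set ℝ)
    (hpos : ∀ r ∈ Λ, (0 : ℝ) < r) (hunb : ∀ M : ℝ, ∃ r ∈ Λ, M < r)
    (X : Λ → Type*) [∀ r, MetricSpace (X r)]
    (ψ : ∀ r s : Λ, (r : ℝ) ≤ (s : ℝ) → X s → X r)
    (hsurj : ∀ (r s : Λ) (h : (r : ℝ) ≤ (s : ℝ)), Function.Surjective (ψ r s h))
    (hlip : ∀ (r s : Λ) (h : (r : ℝ) ≤ (s : ℝ)), LipschitzWith 1 (ψ r s h))
    (hid : ∀ (r : Λ) (h : (r : ℝ) ≤ (r : ℝ)) (x : X r), ψ r r h x = x)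
    (hcomp : ∀ (r s t : Λ) (hrs : (r : ℝ) ≤ (s : ℝ)) (hst : (s : ℝ) ≤ (t : ℝ))
      (x : X t), ψ r s hrs (ψ s t hst x) = ψ r t (hrs.trans hst) x)
    (r : Λ) (ε : ℝ) (hε : 0 < ε) :
    (∀ γ₀ γk : List (X r), MChain ε γ₀ → MChain ε γk → MHomotopic ε γ₀ γk →
      ∀ g₀ gk : List (InvLim Λ X ψ),
        WC.IsChain (ERel Λ X ψ r ε) g₀ → WC.IsChain (ERel Λ X ψ r ε) gk →
        g₀.map (fun a => a.1 r) = γ₀ → gk.map (fun a => a.1 r) = γk →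
        g₀.head? = gk.head? → g₀.getLast? = gk.getLast? →
        WC.Homotopic (ERel Λ X ψ r ε) g₀ gk) ∧
    (∀ (lam : List (X r)) (z : X r), MChain ε lam → WC.FromTo lam z z →
      MHomotopic ε lam [z] →
      ∀ lhat : List (InvLim Λ X ψ), WC.IsChain (ERel Λ X ψ r ε) lhat →
        lhat.map (fun a => a.1 r) = lam →
        ∀ zhat : InvLim Λ X ψ, lhat.head? = some zhat →
          lhat.getLast? = some zhat →
          WC.Homotopic (ERel Λ X ψ r ε) lhat [zhat]) :=
  invLim_homotopy_lifting_general Λ hunb X ψ hsurj hcomp r ε hε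
end

section
/- Let f : X → Y be a continuous function between compact metric spaces and let ε > PD(f), where PD(f) is the preimage diameter of f. Then there exists δ > 0 such that whenever x, y ∈ Y with d(x,y) < δ, the diameter of f⁻¹({x,y}) is less than ε. -/
/-- The preimage diameter of `f`: the supremum over `y` of the diameters of the
fibers `f⁻¹(y)`. -/
noncomputable def PD {X Y : Type*} [MetricSpace X] [MetricSpace Y]
    (f : X → Y) : ℝ :=
  ⨆ y : Y, Metric.diam (f ⁻¹' {y})

/-! Pairs of points at distance at least `r > PD f` form a compact subset of `X × X` on which
`(a, b) ↦ dist (f a) (f b)` is continuous and positive, hence bounded below by some `δ > 0`.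
Points of `f⁻¹({x, y})` have images at distance at most `dist x y`, so once `dist x y < δ` they
are pairwise closer than `r`. -/

open Metric Bornology

section PreimageDiameter

variable {X Y : Type*} [MetricSpace X] [MetricSpace Y]

lemma PD_nonneg (f : X → Y) : 0 ≤ PD f :=
  Real.iSup_nonneg fun _ => diam_nonneg

lemma diam_preimage_singleton_le_PD [BoundedSpace X] (f : X → Y) (y : Y) :
    diam (f ⁻¹' {y}) ≤ PD f :=
  le_ciSup (f := fun z => diam (f ⁻¹' {z})) ⟨diam (Set.univ : Set X), by
    rintro _ ⟨z, rfl⟩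
    exact diam_mono (Set.subset_univ _) (IsBounded.all _)⟩ y

lemma dist_le_PD_of_apply_eq [BoundedSpace X] (f : X → Y) {a b : X} (h : f a = f b) :
    dist a b ≤ PD f :=
  (dist_le_diam_of_mem (IsBounded.all (f ⁻¹' {f b})) h rfl).trans
    (diam_preimage_singleton_le_PD f _)

lemma exists_pos_forall_dist_lt_of_PD_lt [CompactSpace X] {f : X → Y} (hf : Continuous f)
    {r : ℝ} (hr : PD f < r) :
    ∃ δ > 0, ∀ a b : X, dist (f a) (f b) < δ → dist a b < r := by
  set K : Set (X × X) := {p | r ≤ dist p.1 p.2}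
  have hK : IsCompact K := (isClosed_le continuous_const continuous_dist).isCompact
  have hpos : ∀ p ∈ K, 0 < dist (f p.1) (f p.2) := fun p hp =>
    dist_pos.2 fun hfp => ((dist_le_PD_of_apply_eq f hfp).trans_lt hr).not_ge hp
  obtain ⟨δ, hδ, hδK⟩ := hK.exists_forall_le' (by fun_prop) hpos
  exact ⟨δ, hδ, fun a b hab => not_le.1 fun hab_K => (hδK (a, b) hab_K).not_gt hab⟩

end PreimageDiameter

theorem exists_delta_of_preimage_diameter_general {X Y : Type*}
    [MetricSpace X] [MetricSpace Y] [CompactSpace X]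
    (f : X → Y) (hf : Continuous f) (ε : ℝ) (hε : PD f < ε) :
    ∃ δ : ℝ, 0 < δ ∧ ∀ x y : Y, dist x y < δ →
      Metric.diam (f ⁻¹' {x, y}) < ε := by
  obtain ⟨r, hPDr, hrε⟩ := exists_between hε
  obtain ⟨δ, hδ, hδr⟩ := exists_pos_forall_dist_lt_of_PD_lt hf hPDr
  refine ⟨δ, hδ, fun x y hxy => ?_⟩
  refine (diam_le_of_forall_dist_le ((PD_nonneg f).trans hPDr.le) fun a ha b hb =>
    (hδr a b ?_).le).trans_lt hrε
  calc dist (f a) (f b) ≤ diam ({x, y} : Set Y) :=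
        dist_le_diam_of_mem (Set.toFinite _).isBounded ha hb
    _ = dist x y := diam_pair
    _ < δ := hxy

/-- For a continuous map `f : X → Y` between compact metric
spaces and `ε > PD(f)`, there is `δ > 0` such that whenever `d(x,y) < δ` in
`Y`, the diameter of `f⁻¹({x,y})` is less than `ε`. -/
theorem exists_delta_of_preimage_diameter {X Y : Type*}
    [MetricSpace X] [MetricSpace Y] [CompactSpace X] [CompactSpace Y]
    (f : X → Y) (hf : Continuous f) (ε : ℝ) (hε : PD f < ε) :
    ∃ δ : ℝ, 0 < δ ∧ ∀ x y : Y, dist x y < δ →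
      Metric.diam (f ⁻¹' {x, y}) < ε :=
  exists_delta_of_preimage_diameter_general f hf ε hε
end
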